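/- Let d ≥ 1, let C be a real d×d matrix, and let F : ℝ^d → ℝ be a measurable, locally integrable function for which there exist constants K > 0 and δ > 0 such that |F(x) − (1 − (1/6)⟨x, C x⟩)| ≤ K‖x‖⁴ whenever ‖x‖ ≤ δ. Then, as r → 0⁺, the function r ↦ ∫_{‖x‖ ≤ r} F(x) dx − ω_d r^d (1 − (trace C) r² / (6(d + 2))) is O(r^{d+4}); explicitly, for all 0 ≤ r ≤ δ one has |∫_{‖x‖ ≤ r} F(x) dx − ω_d r^d (1 − (trace C) r² / (6(d + 2)))| ≤ K · (d/(d+4)) · ω_d · r^{d+4}. -/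

import Mathlib

/-!
The model integrand `1 - ⟨x, C x⟩ / 6` integrates exactly over a ball. The mixed moments
`∫ x i * x j` (`i ≠ j`) vanish because reflecting coordinate `i` is a volume-preserving isometry
fixing the ball, and permuting coordinates shows the diagonal moments are all equal; since they
sum to `∫ ‖x‖²`, each is `ω_d r^(d+2) / (d+2)`. Polar coordinates give
`∫_{B_r} ‖x‖ⁿ = d / (d+n) · ω_d r^(d+n)`, which supplies both this value and, with `n = 4`, the
integral of the error bound `K ‖x‖⁴`.
-/

open MeasureTheory Metric Set Module

section Radial

variable {E : Type*} [NormedAddCommGroup E] [NormedSpace ℝ E] [Nontrivial E]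
  [FiniteDimensional ℝ E] [MeasurableSpace E] [BorelSpace E]

theorem integral_closedBall_norm_pow (μ : Measure E) [μ.IsAddHaarMeasure] (n : ℕ) {r : ℝ}
    (hr : 0 ≤ r) :
    ∫ x in closedBall (0 : E) r, ‖x‖ ^ n ∂μ =
      finrank ℝ E / (finrank ℝ E + n) * μ.real (closedBall 0 1) * r ^ (finrank ℝ E + n) := by
  set d := finrank ℝ E
  have hd : 0 < d := finrank_pos
  have h_ind : (closedBall (0 : E) r).indicator (‖·‖ ^ n) =
      fun x ↦ (Iic r).indicator (· ^ n) ‖x‖ := by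
    ext x
    simp only [indicator, mem_closedBall, dist_zero_right, mem_Iic]
  have h_radial : ∫ y in Ioi (0 : ℝ), y ^ (d - 1) • (Iic r).indicator (· ^ n) y =
      r ^ (d + n) / (d + n) := by
    have h_pow : ∀ y : ℝ, y ^ (d - 1) • (Iic r).indicator (· ^ n) y =
        (Iic r).indicator (· ^ (d - 1 + n)) y := fun y ↦ by
      by_cases hy : y ∈ Iic r <;> simp [hy, pow_add]
    simp_rw [h_pow]
    rw [setIntegral_indicator measurableSet_Iic, Ioi_inter_Iic,
      ← intervalIntegral.integral_of_le hr, integral_pow, show d - 1 + n + 1 = d + n by omega,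
      zero_pow (by omega), sub_zero]
    congr 1
    norm_cast
    omega
  rw [← integral_indicator measurableSet_closedBall, h_ind, integral_fun_norm_addHaar, h_radial,
    Measure.addHaar_real_closedBall_eq_addHaar_real_ball, nsmul_eq_mul, smul_eq_mul]
  ring

end Radial

theorem setIntegral_closedBall_comp_linearIsometryEquiv {E F : Type*} [NormedAddCommGroup E]
    [InnerProductSpace ℝ E] [FiniteDimensional ℝ E] [MeasurableSpace E] [BorelSpace E]
    [NormedAddCommGroup F] [NormedSpace ℝ F] (e : E ≃ₗᵢ[ℝ] E) (f : E → F) (r : ℝ) :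
    ∫ x in closedBall (0 : E) r, f (e x) = ∫ x in closedBall (0 : E) r, f x := by
  have h_pre : e ⁻¹' closedBall 0 r = closedBall 0 r := by ext; simp
  simpa only [h_pre] using
    e.measurePreserving.setIntegral_preimage_emb e.toHomeomorph.measurableEmbedding f
      (closedBall 0 r)

namespace EuclideanSpace

variable {ι : Type*} [Fintype ι]

theorem integral_closedBall_coord_mul_coord_of_ne {i j : ι} (hij : i ≠ j) (r : ℝ) :
    ∫ x in closedBall (0 : EuclideanSpace ℝ ι) r, x i * x j = 0 := by
  classical
  let reflect : EuclideanSpace ℝ ι ≃ₗᵢ[ℝ] EuclideanSpace ℝ ι :=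
    LinearIsometryEquiv.piLpCongrRight 2
      fun k ↦ if k = i then LinearIsometryEquiv.neg ℝ else LinearIsometryEquiv.refl ℝ ℝ
  have h_odd : ∀ x, reflect x i * reflect x j = -(x i * x j) := fun x ↦ by
    simp [reflect, hij.symm]
  have h := setIntegral_closedBall_comp_linearIsometryEquiv reflect (fun x ↦ x i * x j) r
  simp only [h_odd, integral_neg] at h
  linarith

theorem integral_closedBall_coord_mul_self_eq (i j : ι) (r : ℝ) :
    ∫ x in closedBall (0 : EuclideanSpace ℝ ι) r, x i * x i =
      ∫ x in closedBall (0 : EuclideanSpace ℝ ι) r, x j * x j := by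
  classical
  let swap : EuclideanSpace ℝ ι ≃ₗᵢ[ℝ] EuclideanSpace ℝ ι :=
    LinearIsometryEquiv.piLpCongrLeft 2 ℝ ℝ (Equiv.swap i j)
  have h_swap : ∀ x, swap x i = x j := fun x ↦ by simp [swap]
  simp only [← setIntegral_closedBall_comp_linearIsometryEquiv swap (fun x ↦ x i * x i) r, h_swap]

theorem integral_closedBall_coord_mul_self (i : ι) {r : ℝ} (hr : 0 ≤ r) :
    ∫ x in closedBall (0 : EuclideanSpace ℝ ι) r, x i * x i =
      volume.real (closedBall (0 : EuclideanSpace ℝ ι) 1) * r ^ (Fintype.card ι + 2) /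
        (Fintype.card ι + 2) := by
  have : Nonempty ι := ⟨i⟩
  have h_int : ∀ j : ι, IntegrableOn (fun x : EuclideanSpace ℝ ι ↦ x j * x j)
      (closedBall 0 r) := fun j ↦
    (by fun_prop : Continuous _).continuousOn.integrableOn_compact (isCompact_closedBall 0 r)
  have h_norm_sq : ∫ x in closedBall (0 : EuclideanSpace ℝ ι) r, ‖x‖ ^ 2 =
      Fintype.card ι * ∫ x in closedBall (0 : EuclideanSpace ℝ ι) r, x i * x i := by
    simp_rw [norm_sq_eq, Real.norm_eq_abs, sq_abs, sq]
    rw [integral_finsetSum _ fun j _ ↦ h_int j]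
    simp [integral_closedBall_coord_mul_self_eq _ i]
  rw [integral_closedBall_norm_pow volume 2 hr, finrank_euclideanSpace] at h_norm_sq
  have h_card : (Fintype.card ι : ℝ) ≠ 0 := by exact_mod_cast Fintype.card_ne_zero
  refine mul_left_cancel₀ h_card ?_
  rw [← h_norm_sq]
  ring

theorem integral_closedBall_quadratic_form (C : Matrix ι ι ℝ) {r : ℝ} (hr : 0 ≤ r) :
    ∫ x in closedBall (0 : EuclideanSpace ℝ ι) r, ∑ μ, ∑ ν, C μ ν * x μ * x ν =
      C.trace * (volume.real (closedBall (0 : EuclideanSpace ℝ ι) 1) *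
        r ^ (Fintype.card ι + 2) / (Fintype.card ι + 2)) := by
  have h_int : ∀ μ ν, IntegrableOn (fun x : EuclideanSpace ℝ ι ↦ C μ ν * x μ * x ν)
      (closedBall 0 r) := fun μ ν ↦
    (by fun_prop : Continuous _).continuousOn.integrableOn_compact (isCompact_closedBall 0 r)
  rw [integral_finsetSum _ fun μ _ ↦ integrable_finsetSum _ fun ν _ ↦ h_int μ ν]
  simp_rw [integral_finsetSum _ fun ν _ ↦ h_int _ ν, mul_assoc, integral_const_mul]
  have h_diag : ∀ μ, ∑ ν, C μ ν * ∫ x in closedBall (0 : EuclideanSpace ℝ ι) r, x μ * x ν =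
      C μ μ * ∫ x in closedBall (0 : EuclideanSpace ℝ ι) r, x μ * x μ := fun μ ↦
    Finset.sum_eq_single μ
      (fun ν _ hνμ ↦ by rw [integral_closedBall_coord_mul_coord_of_ne hνμ.symm, mul_zero])
      (by simp)
  simp only [h_diag, integral_closedBall_coord_mul_self _ hr, Matrix.trace, Matrix.diag,
    Finset.sum_mul]

theorem integral_closedBall_one_sub_quadratic_form (C : Matrix ι ι ℝ) {r : ℝ} (hr : 0 ≤ r) :
    ∫ x in closedBall (0 : EuclideanSpace ℝ ι) r, (1 - 1 / 6 * ∑ μ, ∑ ν, C μ ν * x μ * x ν) =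
      volume.real (closedBall (0 : EuclideanSpace ℝ ι) 1) * r ^ Fintype.card ι *
        (1 - C.trace * r ^ 2 / (6 * (Fintype.card ι + 2))) := by
  have h_int : IntegrableOn (fun x : EuclideanSpace ℝ ι ↦ ∑ μ, ∑ ν, C μ ν * x μ * x ν)
      (closedBall 0 r) :=
    (by fun_prop : Continuous _).continuousOn.integrableOn_compact (isCompact_closedBall 0 r)
  rw [integral_sub (integrableOn_const (C := (1 : ℝ)) measure_closedBall_lt_top.ne)
      (h_int.const_mul _),
    integral_const_mul, integral_closedBall_quadratic_form C hr, setIntegral_const,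
    Measure.addHaar_real_closedBall' volume 0 hr, finrank_euclideanSpace, smul_eq_mul]
  field_simp
  ring

end EuclideanSpace

theorem stmt_2_general (d : ℕ) (hd : 1 ≤ d) (C : Matrix (Fin d) (Fin d) ℝ)
    (F : EuclideanSpace ℝ (Fin d) → ℝ)
    (hFloc : LocallyIntegrable F volume) (K δ : ℝ)
    (hF : ∀ x : EuclideanSpace ℝ (Fin d), ‖x‖ ≤ δ →
      |F x - (1 - (1 / 6 : ℝ) * ∑ μ : Fin d, ∑ ν : Fin d, C μ ν * x μ * x ν)| ≤ K * ‖x‖ ^ 4) :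
    ∀ r : ℝ, 0 ≤ r → r ≤ δ →
      |(∫ x in Metric.closedBall (0 : EuclideanSpace ℝ (Fin d)) r, F x) -
          (volume (Metric.closedBall (0 : EuclideanSpace ℝ (Fin d)) 1)).toReal * r ^ d *
            (1 - C.trace * r ^ 2 / (6 * ((d : ℝ) + 2)))| ≤
        K * ((d : ℝ) / ((d : ℝ) + 4)) *
          (volume (Metric.closedBall (0 : EuclideanSpace ℝ (Fin d)) 1)).toReal *
            r ^ (d + 4) := by
  intro r hr hrδ
  have : Nonempty (Fin d) := ⟨⟨0, hd⟩⟩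
  set G : EuclideanSpace ℝ (Fin d) → ℝ := fun x ↦ 1 - 1 / 6 * ∑ μ, ∑ ν, C μ ν * x μ * x ν
  have h_model : ∫ x in closedBall 0 r, G x =
      volume.real (closedBall (0 : EuclideanSpace ℝ (Fin d)) 1) * r ^ d *
        (1 - C.trace * r ^ 2 / (6 * ((d : ℝ) + 2))) := by
    simpa only [Fintype.card_fin] using
      EuclideanSpace.integral_closedBall_one_sub_quadratic_form C hr
  have h_bound : ∀ᵐ x ∂volume.restrict (closedBall 0 r), ‖F x - G x‖ ≤ K * ‖x‖ ^ 4 := by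
    filter_upwards [ae_restrict_mem measurableSet_closedBall] with x hx
    exact hF x ((mem_closedBall_zero_iff.mp hx).trans hrδ)
  have h_G_int : IntegrableOn G (closedBall 0 r) :=
    (by fun_prop : Continuous G).continuousOn.integrableOn_compact (isCompact_closedBall 0 r)
  have h_rhs_int : IntegrableOn (fun x : EuclideanSpace ℝ (Fin d) ↦ K * ‖x‖ ^ 4)
      (closedBall 0 r) :=
    (by fun_prop : Continuous _).continuousOn.integrableOn_compact (isCompact_closedBall 0 r)
  calc _ = ‖∫ x in closedBall 0 r, (F x - G x)‖ := by
        rw [integral_sub (hFloc.integrableOn_isCompact (isCompact_closedBall 0 r)) h_G_int,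
          h_model, Real.norm_eq_abs, measureReal_def]
    _ ≤ ∫ x in closedBall 0 r, K * ‖x‖ ^ 4 := norm_integral_le_of_norm_le h_rhs_int h_bound
    _ = _ := by
        rw [integral_const_mul, integral_closedBall_norm_pow volume 4 hr, finrank_euclideanSpace,
          Fintype.card_fin, measureReal_def]
        push_cast
        ring

/-- If `F : ℝ^d → ℝ` is measurable, locally integrable, and satisfies
`|F(x) − (1 − (1/6)⟨x, C x⟩)| ≤ K‖x‖⁴` for `‖x‖ ≤ δ`, then for all `0 ≤ r ≤ δ`,
`|∫_{‖x‖≤r} F − ω_d r^d (1 − (trace C) r²/(6(d+2)))| ≤ K (d/(d+4)) ω_d r^(d+4)`. -/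
theorem stmt_2 (d : ℕ) (hd : 1 ≤ d) (C : Matrix (Fin d) (Fin d) ℝ)
    (F : EuclideanSpace ℝ (Fin d) → ℝ) (hFmeas : Measurable F)
    (hFloc : LocallyIntegrable F volume) (K δ : ℝ) (hK : 0 < K) (hδ : 0 < δ)
    (hF : ∀ x : EuclideanSpace ℝ (Fin d), ‖x‖ ≤ δ →
      |F x - (1 - (1 / 6 : ℝ) * ∑ μ : Fin d, ∑ ν : Fin d, C μ ν * x μ * x ν)| ≤ K * ‖x‖ ^ 4) :
    ∀ r : ℝ, 0 ≤ r → r ≤ δ →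
      |(∫ x in Metric.closedBall (0 : EuclideanSpace ℝ (Fin d)) r, F x) -
          (volume (Metric.closedBall (0 : EuclideanSpace ℝ (Fin d)) 1)).toReal * r ^ d *
            (1 - C.trace * r ^ 2 / (6 * ((d : ℝ) + 2)))| ≤
        K * ((d : ℝ) / ((d : ℝ) + 4)) *
          (volume (Metric.closedBall (0 : EuclideanSpace ℝ (Fin d)) 1)).toReal *
            r ^ (d + 4) :=
  stmt_2_general d hd C F hFloc K δ hF
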